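/- arXiv:1801.03480 — 4 statements merged into one kernel-verified Lean document; each statement's English description precedes it below -/
import Mathlib

section
/- Let G be a group and X : ℂ[G] → ℂ[G] a ℂ-linear map. Then X is a derivation (i.e. X(u·v) = X(u)·v + u·X(v) for all u, v ∈ ℂ[G]) if and only if the associated function T^X : G → G → ℂ, T^X(g, a) = (X (single g 1)) (g·a), satisfies the additivity (character) condition: T^X(g₂·g₁, a) = T^X(g₂, g₁·a·g₁⁻¹) + T^X(g₁, a) for all g₁, g₂, a ∈ G. -/
/-!
Both sides of the Leibniz rule are bilinear in `(u, v)`, so it holds as soon as it holds for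
basis elements `single g 1`, `single h 1`. For those, comparing the coefficients of `g * h * a`
on both sides is literally the additivity of `T^X` at `(h, g, a)`.
-/

namespace MonoidAlgebra

theorem leibniz_iff_forall_single {k G : Type*} [CommSemiring k] [Monoid G]
    (X : MonoidAlgebra k G →ₗ[k] MonoidAlgebra k G) :
    (∀ u v, X (u * v) = X u * v + u * X v) ↔
      ∀ g h : G,
        X (single (g * h) 1) = X (single g 1) * single h 1 + single g 1 * X (single h 1) := by
  refine ⟨fun hX g h => by rw [← hX, single_mul_single, one_mul], fun hX u v => ?_⟩
  have : (LinearMap.mul k (MonoidAlgebra k G)).compr₂ X =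
      (LinearMap.mul k _).compl₁₂ X LinearMap.id + (LinearMap.mul k _).compl₁₂ LinearMap.id X := by
    ext g h : 4
    simpa using hX g h
  exact congr($this u v)

theorem coeff_mul_single_one_add_single_one_mul {R G : Type*} [Semiring R] [Group G]
    (x y : MonoidAlgebra R G) (g h a : G) :
    (x * single h 1 + single g 1 * y).coeff (g * h * a) =
      x.coeff (g * (h * a * h⁻¹)) + y.coeff (h * a) := by
  simp only [coeff_add, Finsupp.add_apply, coeff_mul_single_apply, coeff_single_mul_apply,
    mul_one, one_mul]
  congr 2 <;> group

end MonoidAlgebra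

open MonoidAlgebra

/-- A `ℂ`-linear map `X : ℂ[G] → ℂ[G]` is a derivation iff its associated function
`T^X(g, a) = (X (single g 1)) (g·a)` satisfies the additivity (character) condition
`T^X(g₂·g₁, a) = T^X(g₂, g₁·a·g₁⁻¹) + T^X(g₁, a)`. -/
theorem isDerivation_iff_char_additive {G : Type*} [Group G]
    (X : MonoidAlgebra ℂ G →ₗ[ℂ] MonoidAlgebra ℂ G) :
    (∀ u v : MonoidAlgebra ℂ G, X (u * v) = X u * v + u * X v) ↔
    (∀ g₁ g₂ a : G,
      (X (MonoidAlgebra.single (g₂ * g₁) 1)).coeff (g₂ * g₁ * a) =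
        (X (MonoidAlgebra.single g₂ 1)).coeff (g₂ * (g₁ * a * g₁⁻¹)) +
          (X (MonoidAlgebra.single g₁ 1)).coeff (g₁ * a)) := by
  rw [leibniz_iff_forall_single, forall_comm]
  refine forall₂_congr fun g₁ g₂ => ?_
  rw [← coeff_inj, Finsupp.ext_iff, (mul_left_surjective (g₂ * g₁)).forall]
  simp only [coeff_mul_single_one_add_single_one_mul]
end

section
/- Let G be a group. The assignment X ↦ T^X, with T^X(g, a) = (X (single g 1)) (g·a), is a ℂ-linear bijection from the space of all derivations of ℂ[G] onto the space of all locally finitely supported additive characters, i.e. all functions T : G → G → ℂ such that (i) T(g₂·g₁, a) = T(g₂, g₁·a·g₁⁻¹) + T(g₁, a) for all g₁, g₂, a ∈ G, and (ii) for every g ∈ G the set {a ∈ G : T(g, a) ≠ 0} is finite. -/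
/-!
A linear endomorphism `X` of `ℂ[G]` is determined by the images of the basis elements, and
writing `X(δ_g) = δ_g · t_g`, the function `T^X(g, ·)` is exactly the (finitely supported)
coefficient function of `t_g`. Conversely every family of finitely supported `t_g` defines such
an `X`. Multiplying out, the Leibniz rule on basis elements
`X(δ_{g₂g₁}) = X(δ_{g₂}) δ_{g₁} + δ_{g₂} X(δ_{g₁})` becomes `t_{g₂g₁} = δ_{g₁}⁻¹ t_{g₂} δ_{g₁} + t_{g₁}`,
which is the additivity of `T^X`; and by bilinearity the Leibniz rule on basis elements already
makes `X` a derivation.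
-/

/-- The function `T^X : G → G → ℂ` associated with a `ℂ`-linear endomorphism `X` of the
group algebra `ℂ[G]`: `T^X(g, a) = (X (single g 1)) (g·a)`. -/
noncomputable def charOf {G : Type*} [Group G]
    (X : MonoidAlgebra ℂ G →ₗ[ℂ] MonoidAlgebra ℂ G) : G → G → ℂ :=
  fun g a => (X (MonoidAlgebra.single g 1)).coeff (g * a)

open MonoidAlgebra

theorem MonoidAlgebra.leibniz_of_leibniz_single {k G : Type*} [CommSemiring k] [Monoid G]
    (D : k[G] →ₗ[k] k[G])
    (h : ∀ g g' : G,
      D (single (g * g') 1) = D (single g 1) * single g' 1 + single g 1 * D (single g' 1))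
    (u v : k[G]) : D (u * v) = D u * v + u * D v := by
  have key : (LinearMap.mul k k[G]).compr₂ D =
      (LinearMap.mul k k[G]).compl₁₂ D LinearMap.id +
        (LinearMap.mul k k[G]).compl₁₂ LinearMap.id D :=
    LinearMap.ext_basis (basis G k) (basis G k) fun g g' => by
      simpa [single_mul_single] using h g g'
  exact congr($key u v)

section
variable {G : Type*} [Group G]

theorem charOf_add (X Y : ℂ[G] →ₗ[ℂ] ℂ[G]) : charOf (X + Y) = charOf X + charOf Y := by
  ext g a
  simp [charOf]

theorem charOf_smul (c : ℂ) (X : ℂ[G] →ₗ[ℂ] ℂ[G]) : charOf (c • X) = c • charOf X := by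
  ext g a
  simp [charOf]

theorem charOf_injective : Function.Injective (charOf (G := G)) := by
  intro X Y h
  refine (basis G ℂ).ext fun g => ?_
  ext b
  simpa [charOf] using congr_fun₂ h g (g⁻¹ * b)

theorem finite_support_charOf (X : ℂ[G] →ₗ[ℂ] ℂ[G]) (g : G) : (charOf X g).support.Finite :=
  ((X (single g 1)).coeff.support.finite_toSet.preimage (mul_right_injective g).injOn).subset
    fun _ ha => Finsupp.mem_support_iff.2 ha

theorem charOf_mul_of_leibniz (X : ℂ[G] →ₗ[ℂ] ℂ[G])
    (hX : ∀ u v : ℂ[G], X (u * v) = X u * v + u * X v) (g₁ g₂ a : G) :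
    charOf X (g₂ * g₁) a = charOf X g₂ (g₁ * a * g₁⁻¹) + charOf X g₁ a := by
  simp only [charOf]
  rw [← one_mul (1 : ℂ), ← single_mul_single, hX, coeff_add, Finsupp.add_apply,
    coeff_mul_single_apply, coeff_single_mul_apply]
  simp [mul_assoc]

variable (T : G → G → ℂ) (hT : ∀ g : G, (T g).support.Finite)

noncomputable def ofChar : ℂ[G] →ₗ[ℂ] ℂ[G] :=
  (basis G ℂ).constr ℂ fun g => single g 1 * ofCoeff (Finsupp.ofSupportFinite (T g) (hT g))

theorem ofChar_single_one (g : G) :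
    ofChar T hT (single g 1) = single g 1 * ofCoeff (Finsupp.ofSupportFinite (T g) (hT g)) := by
  rw [← basis_apply, ofChar, Module.Basis.constr_basis, basis_apply]

theorem charOf_ofChar : charOf (ofChar T hT) = T := by
  ext g a
  simp [charOf, ofChar_single_one, Finsupp.ofSupportFinite_coe]

theorem ofChar_leibniz_single
    (hadd : ∀ g₁ g₂ a : G, T (g₂ * g₁) a = T g₂ (g₁ * a * g₁⁻¹) + T g₁ a) (g g' : G) :
    ofChar T hT (single (g * g') 1) =
      ofChar T hT (single g 1) * single g' 1 + single g 1 * ofChar T hT (single g' 1) := by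
  ext b
  obtain ⟨a, rfl⟩ : ∃ a, b = g * g' * a := ⟨(g * g')⁻¹ * b, by group⟩
  simp [ofChar_single_one, Finsupp.ofSupportFinite_coe, mul_assoc, hadd]

end

/-- The assignment `X ↦ T^X` is a `ℂ`-linear bijection from the space of derivations of
`ℂ[G]` onto the space of locally finitely supported additive characters on the groupoid
of the adjoint action of `G`. -/
theorem charOf_derivations_bijective {G : Type*} [Group G] :
    (∀ X Y : MonoidAlgebra ℂ G →ₗ[ℂ] MonoidAlgebra ℂ G, charOf (X + Y) = charOf X + charOf Y) ∧
    (∀ (c : ℂ) (X : MonoidAlgebra ℂ G →ₗ[ℂ] MonoidAlgebra ℂ G), charOf (c • X) = c • charOf X) ∧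
    Set.InjOn (charOf (G := G))
      {X | ∀ u v : MonoidAlgebra ℂ G, X (u * v) = X u * v + u * X v} ∧
    charOf (G := G) '' {X | ∀ u v : MonoidAlgebra ℂ G, X (u * v) = X u * v + u * X v} =
      {T : G → G → ℂ |
        (∀ g₁ g₂ a : G, T (g₂ * g₁) a = T g₂ (g₁ * a * g₁⁻¹) + T g₁ a) ∧
        (∀ g : G, {a : G | T g a ≠ 0}.Finite)} := by
  refine ⟨charOf_add, charOf_smul, charOf_injective.injOn, Set.ext fun T => ⟨?_, ?_⟩⟩
  · rintro ⟨X, hX, rfl⟩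
    exact ⟨charOf_mul_of_leibniz X hX, finite_support_charOf X⟩
  · rintro ⟨hadd, hfin⟩
    exact ⟨ofChar T hfin, leibniz_of_leibniz_single _ (ofChar_leibniz_single T hfin hadd),
      charOf_ofChar T hfin⟩
end

section
/- Let G be a group, n a natural number, π : FreeGroup (Fin n) →* G a surjective group homomorphism, and R a subset of the kernel of π whose normal closure equals ker π. Let τ : Fin n → G → ℂ and let T̃ be its π-twisted free extension. If T̃(r, a) = 0 for every r ∈ R and every a ∈ G, then T̃(w, a) = 0 for every w ∈ ker π and every a ∈ G; consequently there is a (unique) well-defined function T : G → G → ℂ with T(π(w), a) = T̃(w, a) for all w ∈ FreeGroup (Fin n) and a ∈ G, and T is an additive character, i.e. T(g₂·g₁, a) = T(g₂, g₁·a·g₁⁻¹) + T(g₁, a) for all g₁, g₂, a ∈ G. -/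
/-- Let `π : FreeGroup (Fin n) →* G` be surjective and `R` a subset of `ker π` whose
normal closure is `ker π`. If the `π`-twisted free extension `T̃` of `τ` vanishes on
`R`, then it vanishes on all of `ker π`; consequently it descends to a unique function
`T : G → G → ℂ` with `T(π w, a) = T̃(w, a)`, and `T` is an additive character. -/
theorem twisted_free_extension_descends {G : Type*} [Group G] (n : ℕ)
    (π : FreeGroup (Fin n) →* G) (hπ : Function.Surjective π)
    (R : Set (FreeGroup (Fin n))) (hR : R ⊆ (π.ker : Set (FreeGroup (Fin n))))
    (hRcl : Subgroup.normalClosure R = π.ker)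
    (τ : Fin n → G → ℂ)
    (T' : FreeGroup (Fin n) → G → ℂ)
    (hT1 : ∀ (i : Fin n) (a : G), T' (FreeGroup.of i) a = τ i a)
    (hT2 : ∀ (w₁ w₂ : FreeGroup (Fin n)) (a : G),
      T' (w₂ * w₁) a = T' w₂ (π w₁ * a * (π w₁)⁻¹) + T' w₁ a)
    (hvanish : ∀ r ∈ R, ∀ a : G, T' r a = 0) :
    (∀ w ∈ π.ker, ∀ a : G, T' w a = 0) ∧
    ∃ T : G → G → ℂ,
      (∀ (w : FreeGroup (Fin n)) (a : G), T (π w) a = T' w a) ∧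
      (∀ T'' : G → G → ℂ,
        (∀ (w : FreeGroup (Fin n)) (a : G), T'' (π w) a = T' w a) → T'' = T) ∧
      (∀ g₁ g₂ a : G, T (g₂ * g₁) a = T g₂ (g₁ * a * g₁⁻¹) + T g₁ a) := by
  have hone : ∀ a : G, T' 1 a = 0 := by
    intro a
    have h := hT2 1 1 a
    simp at h
    exact h
  have hinv : ∀ w : FreeGroup (Fin n), ∀ a : G,
      T' (w⁻¹) (π w * a * (π w)⁻¹) + T' w a = 0 := by
    intro w a
    have h := hT2 w w⁻¹ a
    simpa [hone] using h.symm
  -- the subgroup of kernel elements where T' vanishes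
  let K : Subgroup (FreeGroup (Fin n)) :=
    { carrier := {w | π w = 1 ∧ ∀ a : G, T' w a = 0}
      one_mem' := ⟨map_one π, hone⟩
      mul_mem' := by
        rintro x y ⟨hx1, hx2⟩ ⟨hy1, hy2⟩
        refine ⟨by simp [hx1, hy1], fun a => ?_⟩
        have := hT2 y x a
        simp [hy1, hx2, hy2] at this
        simpa using this
      inv_mem' := by
        rintro x ⟨hx1, hx2⟩
        refine ⟨by simp [hx1], fun a => ?_⟩
        have := hinv x a
        simpa [hx1, hx2 a] using this }
  have hKnormal : K.Normal := by
    constructor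
    rintro x ⟨hx1, hx2⟩ g
    refine ⟨by simp [hx1], fun a => ?_⟩
    have h1 : T' (g * (x * g⁻¹)) a
        = T' g (π (x * g⁻¹) * a * (π (x * g⁻¹))⁻¹) + T' (x * g⁻¹) a :=
      hT2 (x * g⁻¹) g a
    have h2 : T' (x * g⁻¹) a = T' x (π g⁻¹ * a * (π g⁻¹)⁻¹) + T' g⁻¹ a :=
      hT2 g⁻¹ x a
    have h3 : T' (g * g⁻¹) a = T' g (π g⁻¹ * a * (π g⁻¹)⁻¹) + T' g⁻¹ a :=
      hT2 g⁻¹ g a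
    have h4 : T' g (π g⁻¹ * a * (π g⁻¹)⁻¹) + T' g⁻¹ a = 0 := by
      rw [← h3]; simpa using hone a
    have hx1' : π (x * g⁻¹) = π g⁻¹ := by simp [hx1]
    calc T' (g * x * g⁻¹) a = T' (g * (x * g⁻¹)) a := by rw [mul_assoc]
      _ = T' g (π g⁻¹ * a * (π g⁻¹)⁻¹) + (T' x (π g⁻¹ * a * (π g⁻¹)⁻¹) + T' g⁻¹ a) := by
          rw [h1, h2, hx1']
      _ = 0 := by rw [hx2]; simpa using h4
  have hKer : ∀ w ∈ π.ker, ∀ a : G, T' w a = 0 := by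
    have hsub : Subgroup.normalClosure R ≤ K := by
      apply Subgroup.normalClosure_le_normal
      intro r hr
      exact ⟨hR hr, hvanish r hr⟩
    intro w hw a
    rw [← hRcl] at hw
    exact (hsub hw).2 a
  refine ⟨hKer, ?_⟩
  choose s hs using hπ
  have hw : ∀ (w : FreeGroup (Fin n)) (a : G), T' (s (π w)) a = T' w a := by
    intro w a
    have hk : π (w * (s (π w))⁻¹) = 1 := by simp [hs]
    have h := hT2 (s (π w)) (w * (s (π w))⁻¹) a
    rw [inv_mul_cancel_right, hKer _ hk, zero_add] at h
    exact h.symm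
  refine ⟨fun g a => T' (s g) a, ?_, ?_, ?_⟩
  · intro w a
    exact hw w a
  · intro T'' hT''
    funext g a
    have := hT'' (s g) a
    rw [hs] at this
    simpa using this
  · intro g₁ g₂ a
    have h := hT2 (s g₁) (s g₂) a
    have hπmul : π (s g₂ * s g₁) = g₂ * g₁ := by simp [hs]
    have key := hw (s g₂ * s g₁) a
    rw [hπmul] at key
    show T' (s (g₂ * g₁)) a = T' (s g₂) (g₁ * a * g₁⁻¹) + T' (s g₁) a
    rw [key, h, hs g₁]
end

section
/- Let G be a group, n a natural number, π : FreeGroup (Fin n) →* G a surjective group homomorphism, and R a finite subset of ker π whose normal closure equals ker π. Let Z be the ℂ-vector space of all functions τ : Fin n → G → ℂ such that each τ i is finitely supported and the π-twisted free extension T̃ of τ satisfies T̃(r, a) = 0 for every r ∈ R and a ∈ G; let B ⊆ Z be the subspace of those τ for which there exists a finitely supported t : G → ℂ with τ i a = t(π(FreeGroup.of i)·a·π(FreeGroup.of i)⁻¹) − t(a) for all i and a. Then the map sending a derivation X of ℂ[G] to the function (i, a) ↦ T^X(π(FreeGroup.of i), a) induces a ℂ-linear isomorphism from the quotient of the space of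 derivations of ℂ[G] by the subspace of inner derivations onto the quotient Z/B. -/
namespace GroupAlgebraOut

variable {G : Type*} [Group G] {n : ℕ}

/-- Auxiliary group: pairs `(f, w)` with the `π`-twisted multiplication
`(f₂, w₂)·(f₁, w₁) = (a ↦ f₂(π w₁ · a · π w₁⁻¹) + f₁ a, w₂·w₁)`. -/
@[ext] structure TwProd (π : FreeGroup (Fin n) →* G) : Type _ where
  f : G → ℂ
  w : FreeGroup (Fin n)

namespace TwProd

variable {π : FreeGroup (Fin n) →* G}

instance : Mul (TwProd π) :=
  ⟨fun x y => ⟨fun a => x.f (π y.w * a * (π y.w)⁻¹) + y.f a, x.w * y.w⟩⟩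

instance : One (TwProd π) := ⟨⟨0, 1⟩⟩

instance : Inv (TwProd π) :=
  ⟨fun x => ⟨fun a => -x.f ((π x.w)⁻¹ * a * π x.w), x.w⁻¹⟩⟩

@[simp] lemma mul_f (x y : TwProd π) :
    (x * y).f = fun a => x.f (π y.w * a * (π y.w)⁻¹) + y.f a := rfl

@[simp] lemma mul_w (x y : TwProd π) : (x * y).w = x.w * y.w := rfl

@[simp] lemma one_f : (1 : TwProd π).f = 0 := rfl

@[simp] lemma one_w : (1 : TwProd π).w = 1 := rfl

@[simp] lemma inv_f (x : TwProd π) :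
    x⁻¹.f = fun a => -x.f ((π x.w)⁻¹ * a * π x.w) := rfl

@[simp] lemma inv_w (x : TwProd π) : x⁻¹.w = x.w⁻¹ := rfl

instance : Group (TwProd π) where
  mul_assoc x y z := by
    refine TwProd.ext (funext fun a => ?_) ?_
    · simp [mul_assoc, mul_inv_rev, add_assoc]
    · simp [mul_assoc]
  one_mul x := by
    refine TwProd.ext (funext fun a => ?_) ?_ <;> simp
  mul_one x := by
    refine TwProd.ext (funext fun a => ?_) ?_ <;> simp
  inv_mul_cancel x := by
    refine TwProd.ext (funext fun a => ?_) ?_ <;> simp [mul_assoc]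

end TwProd

/-- The `π`-twisted free extension of `τ : Fin n → G → ℂ`: the unique function
`T̃ : FreeGroup (Fin n) → G → ℂ` with `T̃(of i, a) = τ i a` and
`T̃(w₂·w₁, a) = T̃(w₂, π(w₁)·a·π(w₁)⁻¹) + T̃(w₁, a)`. -/
noncomputable def extChar (π : FreeGroup (Fin n) →* G) (τ : Fin n → G → ℂ) :
    FreeGroup (Fin n) → G → ℂ :=
  fun w => (FreeGroup.lift (fun i => (⟨τ i, FreeGroup.of i⟩ : TwProd π)) w).f

lemma lift_w (π : FreeGroup (Fin n) →* G) (τ : Fin n → G → ℂ) (w : FreeGroup (Fin n)) :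
    (FreeGroup.lift (fun i => (⟨τ i, FreeGroup.of i⟩ : TwProd π)) w).w = w := by
  have h : (MonoidHom.mk' (TwProd.w (π := π)) (fun x y => rfl)).comp
        (FreeGroup.lift (fun i => (⟨τ i, FreeGroup.of i⟩ : TwProd π)))
      = MonoidHom.id (FreeGroup (Fin n)) := by
    refine FreeGroup.ext_hom _ _ fun i => ?_
    simp
  exact DFunLike.congr_fun h w

lemma extChar_of (π : FreeGroup (Fin n) →* G) (τ : Fin n → G → ℂ) (i : Fin n) (a : G) :
    extChar π τ (FreeGroup.of i) a = τ i a := by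
  simp [extChar]

lemma extChar_cocycle (π : FreeGroup (Fin n) →* G) (τ : Fin n → G → ℂ)
    (w₁ w₂ : FreeGroup (Fin n)) (a : G) :
    extChar π τ (w₂ * w₁) a = extChar π τ w₂ (π w₁ * a * (π w₁)⁻¹) + extChar π τ w₁ a := by
  simp [extChar, map_mul, lift_w]

lemma extChar_unique (π : FreeGroup (Fin n) →* G) (τ : Fin n → G → ℂ)
    (T : FreeGroup (Fin n) → G → ℂ)
    (h1 : ∀ (i : Fin n) (a : G), T (FreeGroup.of i) a = τ i a)
    (h2 : ∀ (w₁ w₂ : FreeGroup (Fin n)) (a : G),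
      T (w₂ * w₁) a = T w₂ (π w₁ * a * (π w₁)⁻¹) + T w₁ a) :
    T = extChar π τ := by
  have h : MonoidHom.mk' (fun w => (⟨T w, w⟩ : TwProd π))
        (fun x y => TwProd.ext (funext fun a => h2 y x a) rfl)
      = FreeGroup.lift (fun i => (⟨τ i, FreeGroup.of i⟩ : TwProd π)) := by
    refine FreeGroup.ext_hom _ _ fun i => ?_
    simp only [MonoidHom.mk'_apply, FreeGroup.lift_apply_of]
    exact TwProd.ext (funext fun a => h1 i a) rfl
  funext w a
  have := DFunLike.congr_fun h w
  exact congrFun (congrArg TwProd.f this) a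

lemma extChar_add (π : FreeGroup (Fin n) →* G) (τ σ : Fin n → G → ℂ) :
    extChar π (τ + σ) = extChar π τ + extChar π σ := by
  refine (extChar_unique π (τ + σ) (extChar π τ + extChar π σ) ?_ ?_).symm
  · intro i a; simp [extChar_of]
  · intro w₁ w₂ a
    simp only [Pi.add_apply, extChar_cocycle]
    ring

lemma extChar_smul (π : FreeGroup (Fin n) →* G) (c : ℂ) (τ : Fin n → G → ℂ) :
    extChar π (c • τ) = c • extChar π τ := by
  refine (extChar_unique π (c • τ) (c • extChar π τ) ?_ ?_).symm
  · intro i a; simp [extChar_of]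
  · intro w₁ w₂ a
    simp only [Pi.smul_apply, extChar_cocycle, smul_eq_mul]
    ring

lemma extChar_zero (π : FreeGroup (Fin n) →* G) :
    extChar π (0 : Fin n → G → ℂ) = 0 := by
  refine (extChar_unique π 0 0 ?_ ?_).symm <;> intro <;> simp


variable (G)

/-- Type wrapper for the space of `ℂ`-linear endomorphisms of the group algebra `ℂ[G]`. -/
def EndCG : Type _ := MonoidAlgebra ℂ G →ₗ[ℂ] MonoidAlgebra ℂ G

noncomputable instance : AddCommGroup (EndCG G) :=
  inferInstanceAs (AddCommGroup (MonoidAlgebra ℂ G →ₗ[ℂ] MonoidAlgebra ℂ G))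

noncomputable instance : Module ℂ (EndCG G) :=
  inferInstanceAs (Module ℂ (MonoidAlgebra ℂ G →ₗ[ℂ] MonoidAlgebra ℂ G))

instance : FunLike (EndCG G) (MonoidAlgebra ℂ G) (MonoidAlgebra ℂ G) :=
  inferInstanceAs (FunLike (MonoidAlgebra ℂ G →ₗ[ℂ] MonoidAlgebra ℂ G) _ _)

variable {G}

@[simp] lemma EndCG.add_apply (X Y : EndCG G) (u : MonoidAlgebra ℂ G) :
    (X + Y) u = X u + Y u := rfl

@[simp] lemma EndCG.smul_apply (c : ℂ) (X : EndCG G) (u : MonoidAlgebra ℂ G) :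
    (c • X) u = c • X u := rfl

@[simp] lemma EndCG.zero_apply (u : MonoidAlgebra ℂ G) : (0 : EndCG G) u = 0 := rfl

variable (G)

/-- The space of derivations of the group algebra `ℂ[G]`, i.e. `ℂ`-linear maps
`X : ℂ[G] → ℂ[G]` with `X(u·v) = X(u)·v + u·X(v)`, as a submodule of the endomorphisms. -/
noncomputable def Der : Submodule ℂ (EndCG G) where
  carrier := {X | ∀ u v : MonoidAlgebra ℂ G, X (u * v) = X u * v + u * X v}
  add_mem' := by
    intro X Y hX hY u v
    simp only [EndCG.add_apply, hX u v, hY u v, add_mul, mul_add]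
    abel
  zero_mem' := by intro u v; simp
  smul_mem' := by
    intro c X hX u v
    simp only [EndCG.smul_apply, hX u v, smul_add, smul_mul_assoc, mul_smul_comm]

variable {G}

/-- The inner derivation `ad u : v ↦ u·v − v·u` of `ℂ[G]`. -/
noncomputable def adL (u : MonoidAlgebra ℂ G) : EndCG G :=
  (LinearMap.mulLeft ℂ u - LinearMap.mulRight ℂ u :
    MonoidAlgebra ℂ G →ₗ[ℂ] MonoidAlgebra ℂ G)

lemma adL_apply (u v : MonoidAlgebra ℂ G) : adL u v = u * v - v * u := rfl

variable (G)

/-- The subspace of inner derivations inside the space of derivations of `ℂ[G]`. -/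
noncomputable def Inn : Submodule ℂ ↥(Der G) where
  carrier := {X | ∃ u : MonoidAlgebra ℂ G, (X : EndCG G) = adL u}
  add_mem' := by
    rintro X Y ⟨u, hu⟩ ⟨v, hv⟩
    refine ⟨u + v, ?_⟩
    refine DFunLike.ext _ _ fun w => ?_
    have hX : (X : EndCG G) w = u * w - w * u := by rw [hu, adL_apply]
    have hY : (Y : EndCG G) w = v * w - w * v := by rw [hv, adL_apply]
    have : ((X + Y : ↥(Der G)) : EndCG G) w = (X : EndCG G) w + (Y : EndCG G) w := rfl
    rw [this, hX, hY, adL_apply, add_mul, mul_add]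
    abel
  zero_mem' := by
    refine ⟨0, ?_⟩
    refine DFunLike.ext _ _ fun w => ?_
    have : ((0 : ↥(Der G)) : EndCG G) w = 0 := rfl
    rw [this, adL_apply]
    simp
  smul_mem' := by
    rintro c X ⟨u, hu⟩
    refine ⟨c • u, ?_⟩
    refine DFunLike.ext _ _ fun w => ?_
    have hX : (X : EndCG G) w = u * w - w * u := by rw [hu, adL_apply]
    have : ((c • X : ↥(Der G)) : EndCG G) w = c • (X : EndCG G) w := rfl
    rw [this, hX, adL_apply]
    simp [smul_sub, smul_mul_assoc, mul_smul_comm]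

variable {G}

/-- The space `Z` of locally finitely supported cocycle data on the generators:
functions `τ : Fin n → G → ℂ` with each `τ i` finitely supported whose `π`-twisted
free extension vanishes on the set `R` of relations. -/
noncomputable def Z (π : FreeGroup (Fin n) →* G) (R : Set (FreeGroup (Fin n))) :
    Submodule ℂ (Fin n → G → ℂ) where
  carrier := {τ | (∀ i : Fin n, {a : G | τ i a ≠ 0}.Finite) ∧
    ∀ r ∈ R, ∀ a : G, extChar π τ r a = 0}
  add_mem' := by
    rintro τ σ ⟨hf1, hv1⟩ ⟨hf2, hv2⟩
    constructor
    · intro i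
      refine ((hf1 i).union (hf2 i)).subset fun a ha => ?_
      by_contra h
      simp only [Set.mem_union, Set.mem_setOf_eq, not_or, not_not, ne_eq] at h
      exact ha (by simp [h.1, h.2])
    · intro r hr a
      rw [extChar_add]
      simp [hv1 r hr a, hv2 r hr a]
  zero_mem' := by
    constructor
    · intro i; simp
    · intro r hr a; rw [extChar_zero]; rfl
  smul_mem' := by
    rintro c τ ⟨hf, hv⟩
    constructor
    · intro i
      refine (hf i).subset fun a ha => ?_
      simp only [Set.mem_setOf_eq, Pi.smul_apply, smul_eq_mul, ne_eq] at ha ⊢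
      intro h
      exact ha (by simp [h])
    · intro r hr a
      rw [extChar_smul]
      simp [hv r hr a]

/-- The subspace `B ⊆ Z` of coboundaries: data of the form
`τ i a = t(s_i·a·s_i⁻¹) − t(a)` for a finitely supported `t : G → ℂ`,
where `s_i = π(of i)`. -/
noncomputable def B (π : FreeGroup (Fin n) →* G) (R : Set (FreeGroup (Fin n))) :
    Submodule ℂ ↥(Z π R) where
  carrier := {τ | ∃ t : G → ℂ, {a : G | t a ≠ 0}.Finite ∧
    ∀ (i : Fin n) (a : G), (τ : Fin n → G → ℂ) i a =
      t (π (FreeGroup.of i) * a * (π (FreeGroup.of i))⁻¹) - t a}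
  add_mem' := by
    rintro τ σ ⟨t, ht, hts⟩ ⟨s, hs, hss⟩
    refine ⟨t + s, ?_, ?_⟩
    · refine (ht.union hs).subset fun a ha => ?_
      by_contra h
      simp only [Set.mem_union, Set.mem_setOf_eq, not_or, not_not, ne_eq] at h
      exact ha (by simp [h.1, h.2])
    · intro i a
      have : ((τ + σ : ↥(Z π R)) : Fin n → G → ℂ) i a =
          (τ : Fin n → G → ℂ) i a + (σ : Fin n → G → ℂ) i a := rfl
      rw [this, hts i a, hss i a]
      simp only [Pi.add_apply]
      ring
  zero_mem' := by
    refine ⟨0, by simp, ?_⟩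
    intro i a
    simp
  smul_mem' := by
    rintro c τ ⟨t, ht, hts⟩
    refine ⟨c • t, ?_, ?_⟩
    · refine ht.subset fun a ha => ?_
      simp only [Set.mem_setOf_eq, Pi.smul_apply, smul_eq_mul, ne_eq] at ha ⊢
      intro h
      exact ha (by simp [h])
    · intro i a
      have : ((c • τ : ↥(Z π R)) : Fin n → G → ℂ) i a =
          c • (τ : Fin n → G → ℂ) i a := rfl
      rw [this, hts i a]
      simp only [Pi.smul_apply, smul_eq_mul]
      ring

/-!
A derivation `X` of `ℂ[G]` is determined by its character, and `X ↦ T^X` identifies derivations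
with the functions `T : G → G → ℂ`, finitely supported in the second variable, satisfying the
cocycle identity `T(gh, a) = T(g, h a h⁻¹) + T(h, a)`; the inner derivation `ad u` has the
coboundary `a ↦ u(g a g⁻¹) - u(a)` as character. Pulled back along `π`, a cocycle is the twisted
free extension of its values on the generators, so it is determined by them. Conversely, data `τ`
on the generators come from a cocycle on `G` exactly when `T̃` vanishes on `ker π`; the elements
of `ker π` on which the cocycle `T̃` vanishes form a normal subgroup, so vanishing on `R` suffices.
-/

open MonoidAlgebra Function

noncomputable def character (X : EndCG G) (g a : G) : ℂ :=
  (X (single g 1)).coeff (g * a)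

lemma character_mul {X : EndCG G} (hX : X ∈ Der G) (g h a : G) :
    character X (g * h) a = character X g (h * a * h⁻¹) + character X h a := by
  have hgh : (single (g * h) 1 : MonoidAlgebra ℂ G) = single g 1 * single h 1 := by
    rw [single_mul_single, one_mul]
  simp only [character, hgh, hX (single g 1) (single h 1), coeff_add, Finsupp.add_apply,
    coeff_mul_single_apply, coeff_single_mul_apply, mul_one, one_mul]
  congr 2 <;> group

lemma character_one {X : EndCG G} (hX : X ∈ Der G) (a : G) : character X 1 a = 0 := by
  simpa using character_mul hX 1 1 a

lemma finite_support_character (X : EndCG G) (g : G) : (support (character X g)).Finite :=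
  Set.Finite.preimage (mul_right_injective g).injOn (X (single g 1)).coeff.hasFiniteSupport

lemma ext_of_character_eq {X X' : EndCG G} (h : character X = character X') : X = X' :=
  (MonoidAlgebra.basis G ℂ).ext fun g => MonoidAlgebra.ext <| Finsupp.ext fun x => by
    have hx := congrFun (congrFun h g) (g⁻¹ * x)
    rw [character, character, mul_inv_cancel_left] at hx
    exact hx

lemma adL_mem_Der (u : MonoidAlgebra ℂ G) : adL u ∈ Der G := by
  intro v w
  simp only [adL_apply]
  noncomm_ring

lemma character_adL (u : MonoidAlgebra ℂ G) (g a : G) :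
    character (adL u) g a = u.coeff (g * a * g⁻¹) - u.coeff a := by
  simp only [character, adL_apply, coeff_sub, Finsupp.sub_apply, coeff_mul_single_apply,
    coeff_single_mul_apply, mul_one, one_mul, inv_mul_cancel_left]

lemma mem_Der_of_map_single_mul {X : EndCG G}
    (hX : ∀ g h : G, X (single (g * h) 1) = X (single g 1) * single h 1 + single g 1 * X (single h 1)) :
    X ∈ Der G := by
  let μ := LinearMap.mul ℂ (MonoidAlgebra ℂ G)
  let Xl : MonoidAlgebra ℂ G →ₗ[ℂ] MonoidAlgebra ℂ G := X
  have hbil : μ.compr₂ Xl = μ ∘ₗ Xl + μ.compl₂ Xl :=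
    (MonoidAlgebra.basis G ℂ).ext fun g => (MonoidAlgebra.basis G ℂ).ext fun h => by
      show X (single g 1 * single h 1) = X (single g 1) * single h 1 + single g 1 * X (single h 1)
      rw [single_mul_single, one_mul, hX]
  intro u v
  exact congr($hbil u v)

lemma exists_mem_Der_character_eq (T : G → G → ℂ)
    (hT : ∀ g h a, T (g * h) a = T g (h * a * h⁻¹) + T h a)
    (hfin : ∀ g, (support (T g)).Finite) :
    ∃ X ∈ Der G, character X = T := by
  have hfin_shift (g : G) : (support fun x => T g (g⁻¹ * x)).Finite :=
    (hfin g).preimage (mul_right_injective g⁻¹).injOn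
  let D (g : G) : MonoidAlgebra ℂ G := ofCoeff (Finsupp.ofSupportFinite _ (hfin_shift g))
  have hD (g x : G) : (D g).coeff x = T g (g⁻¹ * x) := rfl
  let X : EndCG G := (MonoidAlgebra.basis G ℂ).constr ℂ D
  have hXsingle (g : G) : X (single g 1) = D g := (MonoidAlgebra.basis G ℂ).constr_basis ℂ D g
  refine ⟨X, mem_Der_of_map_single_mul fun g h => ?_, ?_⟩
  · simp only [hXsingle]
    refine MonoidAlgebra.ext <| Finsupp.ext fun x => ?_
    simp only [coeff_add, Finsupp.add_apply, coeff_mul_single_apply, coeff_single_mul_apply,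
      mul_one, one_mul, hD, hT]
    congr 2 <;> group
  · funext g a
    simp [character, hXsingle, hD]

section ExtChar

variable {π : FreeGroup (Fin n) →* G}

lemma extChar_character {X : EndCG G} (hX : X ∈ Der G) :
    extChar π (fun i => character X (π (FreeGroup.of i))) = fun w => character X (π w) :=
  (extChar_unique π _ (fun w => character X (π w)) (fun _ _ => rfl) fun w₁ w₂ a => by
    rw [map_mul, character_mul hX]).symm

lemma extChar_one (τ : Fin n → G → ℂ) : extChar π τ 1 = 0 := by
  funext a
  simpa using extChar_cocycle π τ 1 1 a

lemma extChar_inv (τ : Fin n → G → ℂ) (w : FreeGroup (Fin n)) (a : G) :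
    extChar π τ w⁻¹ a = -extChar π τ w (π w⁻¹ * a * (π w⁻¹)⁻¹) := by
  have h := extChar_cocycle π τ w⁻¹ w a
  rw [mul_inv_cancel, extChar_one, Pi.zero_apply] at h
  linear_combination -h

lemma finite_support_conj {M : Type*} [Zero M] {f : G → M} (hf : (support f).Finite) (c : G) :
    (support fun a => f (c * a * c⁻¹)).Finite :=
  hf.preimage (MulAut.conj c).injective.injOn

lemma finite_support_extChar {τ : Fin n → G → ℂ} (hτ : ∀ i, (support (τ i)).Finite)
    (w : FreeGroup (Fin n)) : (support (extChar π τ w)).Finite := by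
  induction w using FreeGroup.induction_on with
  | C1 => simp [extChar_one]
  | of i => simpa [funext (extChar_of π τ i)] using hτ i
  | inv_of i ih =>
    simpa [funext (extChar_inv τ (FreeGroup.of i))] using finite_support_conj ih (π (FreeGroup.of i)⁻¹)
  | mul w₁ w₂ ih₁ ih₂ =>
    rw [funext (extChar_cocycle π τ w₂ w₁)]
    exact ((finite_support_conj ih₁ _).union ih₂).subset (support_add _ _)

variable (π) in
def kerExtChar (τ : Fin n → G → ℂ) : Subgroup (FreeGroup (Fin n)) where
  carrier := {w | π w = 1 ∧ extChar π τ w = 0}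
  one_mem' := ⟨map_one π, extChar_one τ⟩
  mul_mem' := by
    rintro w₁ w₂ ⟨hπ₁, h₁⟩ ⟨hπ₂, h₂⟩
    refine ⟨by rw [map_mul, hπ₁, hπ₂, one_mul], funext fun a => ?_⟩
    simp [extChar_cocycle, h₁, h₂]
  inv_mem' := by
    rintro w ⟨hπw, hw⟩
    refine ⟨by rw [map_inv, hπw, inv_one], funext fun a => ?_⟩
    simp [extChar_inv, hw]

instance (τ : Fin n → G → ℂ) : (kerExtChar π τ).Normal where
  conj_mem := by
    rintro r ⟨hπr, hr⟩ w
    refine ⟨by simp [hπr], funext fun a => ?_⟩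
    have hw := extChar_cocycle π τ w⁻¹ w a
    simp only [mul_inv_cancel, extChar_one, Pi.zero_apply, map_inv, inv_inv] at hw
    simpa [extChar_cocycle, hπr, hr] using hw.symm

lemma extChar_eq_zero_of_mem_ker {R : Set (FreeGroup (Fin n))}
    (hRcl : Subgroup.normalClosure R = π.ker) {τ : Fin n → G → ℂ}
    (hτ : ∀ r ∈ R, ∀ a, extChar π τ r a = 0) {w : FreeGroup (Fin n)} (hw : w ∈ π.ker) :
    extChar π τ w = 0 := by
  have hR : R ⊆ kerExtChar π τ := fun r hr =>
    ⟨hRcl.le (Subgroup.subset_normalClosure hr), funext (hτ r hr)⟩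
  rw [← hRcl] at hw
  exact (Subgroup.normalClosure_le_normal hR hw).2

lemma extChar_eq_of_map_eq {τ : Fin n → G → ℂ}
    (hker : ∀ w ∈ π.ker, extChar π τ w = 0) {w w' : FreeGroup (Fin n)} (h : π w = π w') :
    extChar π τ w = extChar π τ w' := by
  have hmem : w * w'⁻¹ ∈ π.ker := by rw [MonoidHom.mem_ker, map_mul, map_inv, h, mul_inv_cancel]
  funext a
  calc extChar π τ w a = extChar π τ (w * w'⁻¹ * w') a := by rw [inv_mul_cancel_right]
    _ = extChar π τ w' a := by rw [extChar_cocycle, hker _ hmem, Pi.zero_apply, zero_add]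

end ExtChar

section Cohomology

variable {π : FreeGroup (Fin n) →* G}

lemma eq_of_character_generators_eq (hπ : Surjective π) {X X' : EndCG G}
    (hX : X ∈ Der G) (hX' : X' ∈ Der G)
    (h : ∀ i, character X (π (FreeGroup.of i)) = character X' (π (FreeGroup.of i))) :
    X = X' := by
  refine ext_of_character_eq <| funext fun g => ?_
  obtain ⟨w, rfl⟩ := hπ g
  have hgen := congrFun (congrArg (extChar π) (funext h)) w
  rwa [extChar_character hX, extChar_character hX'] at hgen

variable {R : Set (FreeGroup (Fin n))}

variable (R) in
noncomputable def derToZ (hRsub : R ⊆ π.ker) : Der G →ₗ[ℂ] Z π R where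
  toFun X := ⟨fun i => character X (π (FreeGroup.of i)),
    fun i => finite_support_character _ _,
    fun r hr a => by
      simpa [extChar_character X.2, MonoidHom.mem_ker.mp (hRsub hr)] using character_one X.2 a⟩
  map_add' _ _ := rfl
  map_smul' _ _ := rfl

lemma derToZ_mem_B_iff (hπ : Surjective π) (hRsub : R ⊆ π.ker) (X : Der G) :
    derToZ R hRsub X ∈ B π R ↔ X ∈ Inn G := by
  constructor
  · rintro ⟨t, ht, hXt⟩
    let u : MonoidAlgebra ℂ G := ofCoeff (Finsupp.ofSupportFinite t ht)
    refine ⟨u, eq_of_character_generators_eq hπ X.2 (adL_mem_Der u) fun i => funext fun a => ?_⟩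
    rw [character_adL]
    exact hXt i a
  · rintro ⟨u, hu⟩
    exact ⟨u.coeff, u.coeff.hasFiniteSupport, fun i a => by
      show character (X : EndCG G) _ a = _
      rw [hu, character_adL]⟩

lemma derToZ_surjective (hπ : Surjective π) (hRcl : Subgroup.normalClosure R = π.ker)
    (hRsub : R ⊆ π.ker) : Surjective (derToZ R hRsub) := by
  rintro ⟨τ, hτfin, hτR⟩
  have hker (w) (hw : w ∈ π.ker) := extChar_eq_zero_of_mem_ker hRcl hτR hw
  let T (g : G) : G → ℂ := extChar π τ (surjInv hπ g)
  have hT (w) : extChar π τ w = T (π w) :=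
    extChar_eq_of_map_eq hker (surjInv_eq hπ (π w)).symm
  have hTmul (g h a) : T (g * h) a = T g (h * a * h⁻¹) + T h a := by
    obtain ⟨v, rfl⟩ := hπ g
    obtain ⟨w, rfl⟩ := hπ h
    rw [← map_mul, ← hT, ← hT, ← hT, extChar_cocycle]
  obtain ⟨X, hX, hXT⟩ := exists_mem_Der_character_eq T hTmul
    fun g => finite_support_extChar hτfin _
  refine ⟨⟨X, hX⟩, Subtype.ext <| funext fun i => ?_⟩
  show character X _ = τ i
  rw [hXT, ← hT, funext (extChar_of π τ i)]

end Cohomology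

theorem out_equiv_cohomology_general (π : FreeGroup (Fin n) →* G) (hπ : Function.Surjective π)
    (R : Set (FreeGroup (Fin n)))
    (hRcl : Subgroup.normalClosure R = π.ker) :
    ∃ (hZ : ∀ X : ↥(Der G),
        (fun (i : Fin n) (a : G) =>
          ((X : EndCG G) (MonoidAlgebra.single (π (FreeGroup.of i)) 1)).coeff
            (π (FreeGroup.of i) * a)) ∈ Z π R)
      (e : (↥(Der G) ⧸ Inn G) ≃ₗ[ℂ] (↥(Z π R) ⧸ B π R)),
      ∀ X : ↥(Der G),
        e (Submodule.Quotient.mk X) =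
          Submodule.Quotient.mk
            (⟨fun (i : Fin n) (a : G) =>
                ((X : EndCG G) (MonoidAlgebra.single (π (FreeGroup.of i)) 1)).coeff
                  (π (FreeGroup.of i) * a),
              hZ X⟩ : ↥(Z π R)) := by
  have hRsub : R ⊆ π.ker := hRcl ▸ Subgroup.subset_normalClosure
  let ψ := (B π R).mkQ ∘ₗ derToZ R hRsub
  have hker : LinearMap.ker ψ = Inn G := by
    ext X
    rw [LinearMap.mem_ker, LinearMap.comp_apply, Submodule.mkQ_apply,
      Submodule.Quotient.mk_eq_zero, derToZ_mem_B_iff hπ]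
  have hψ : Surjective ψ := (B π R).mkQ_surjective.comp (derToZ_surjective hπ hRcl hRsub)
  exact ⟨fun X => (derToZ R hRsub X).2,
    (Submodule.quotEquivOfEq _ _ hker.symm).trans (ψ.quotKerEquivOfSurjective hψ), fun X => rfl⟩

/-- **Main theorem.** Given a finite presentation `π : FreeGroup (Fin n) ↠ G` of a
group `G` with a finite set of relations `R ⊆ ker π` whose normal closure is `ker π`,
the map sending a derivation `X` of `ℂ[G]` to its character data
`(i, a) ↦ T^X(π(of i), a)` on the generators induces a `ℂ`-linear isomorphism from
the space of outer derivations `Out(ℂ[G]) = Der(ℂ[G])/Int(ℂ[G])` onto the quotient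
`Z/B` (the first cohomology with finite supports of the Cayley complex of the groupoid
of the adjoint action of `G`). -/
theorem out_equiv_cohomology (π : FreeGroup (Fin n) →* G) (hπ : Function.Surjective π)
    (R : Set (FreeGroup (Fin n))) (hRfin : R.Finite)
    (hRsub : R ⊆ (π.ker : Set (FreeGroup (Fin n))))
    (hRcl : Subgroup.normalClosure R = π.ker) :
    ∃ (hZ : ∀ X : ↥(Der G),
        (fun (i : Fin n) (a : G) =>
          ((X : EndCG G) (MonoidAlgebra.single (π (FreeGroup.of i)) 1)).coeff
            (π (FreeGroup.of i) * a)) ∈ Z π R)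
      (e : (↥(Der G) ⧸ Inn G) ≃ₗ[ℂ] (↥(Z π R) ⧸ B π R)),
      ∀ X : ↥(Der G),
        e (Submodule.Quotient.mk X) =
          Submodule.Quotient.mk
            (⟨fun (i : Fin n) (a : G) =>
                ((X : EndCG G) (MonoidAlgebra.single (π (FreeGroup.of i)) 1)).coeff
                  (π (FreeGroup.of i) * a),
              hZ X⟩ : ↥(Z π R)) :=
  out_equiv_cohomology_general π hπ R hRcl

end GroupAlgebraOut
end
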